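/- arXiv:1903.05045 — 2 statements merged into one kernel-verified Lean document; each statement's English description precedes it below -/
import Mathlib

section
/- If f ∈ H_w satisfies f(∞) := lim_{t→∞} f(t) = 0, then the shift semigroup satisfies ‖S_t f‖²_{w,∞} ≤ e^{-α_w t} ‖f‖²_{w,∞} where α_w = inf_{x≥0} w'(x)/w(x), i.e. the restriction of S_t to H_w⁰ has operator norm at most e^{-α_w t/2} in the ‖·‖_{w,∞} norm. -/
open MeasureTheory Set Filter Real

/-! The condition `α w ≤ w'` makes `s ↦ e^{-α s} w(s)` nondecreasing, so `w(x) ≤ e^{-α t} w(x + t)`.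
Substituting `y = x + t` therefore bounds the integral of `w(x) ‖f'(x + t)‖²` by `e^{-α t}` times
the integral of `w ‖f'‖²` over `(t, ∞)`, which is at most the one over `(0, ∞)` because `w ≥ w(0) = 1`
makes the integrand nonnegative. -/

section Shift

variable {E : Type*} [NormedAddCommGroup E]

lemma integrableOn_Ioi_comp_add_right_iff (g : ℝ → E) (a t : ℝ) :
    IntegrableOn (fun x => g (x + t)) (Ioi a) ↔ IntegrableOn g (Ioi (a + t)) := by
  simpa [Function.comp_def, preimage_add_const_Ioi] using
    (measurePreserving_add_right volume t).integrableOn_comp_preimage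
      (measurableEmbedding_addRight t) (f := g) (s := Ioi (a + t))

lemma integral_Ioi_comp_add_right [NormedSpace ℝ E] (g : ℝ → E) (a t : ℝ) :
    ∫ x in Ioi a, g (x + t) = ∫ y in Ioi (a + t), g y := by
  simpa [preimage_add_const_Ioi] using
    (measurePreserving_add_right volume t).setIntegral_preimage_emb
      (measurableEmbedding_addRight t) g (Ioi (a + t))

end Shift

lemma monotoneOn_exp_neg_mul_mul_of_mul_le_deriv {w : ℝ → ℝ} (hw : Differentiable ℝ w)
    {α a : ℝ} (hα : ∀ x ≥ a, α * w x ≤ deriv w x) :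
    MonotoneOn (fun s => exp (-(α * s)) * w s) (Ici a) := by
  have hderiv : ∀ s, HasDerivAt (fun s => exp (-(α * s)) * w s)
      (exp (-(α * s)) * (deriv w s - α * w s)) s := fun s =>
    (((hasDerivAt_id' s).const_mul α).neg.exp.mul (hw s).hasDerivAt).congr_deriv
      (by simp only [Pi.neg_apply]; ring)
  refine monotoneOn_of_deriv_nonneg (convex_Ici a)
    (fun s _ => (hderiv s).continuousAt.continuousWithinAt)
    (fun s _ => (hderiv s).differentiableAt.differentiableWithinAt) fun s hs => ?_
  rw [interior_Ici] at hs
  rw [(hderiv s).deriv]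
  exact mul_nonneg (exp_nonneg _) (sub_nonneg.2 (hα s hs.le))

lemma le_exp_neg_mul_mul_add_of_mul_le_deriv {w : ℝ → ℝ} (hw : Differentiable ℝ w)
    {α x : ℝ} (hα : ∀ y ≥ x, α * w y ≤ deriv w y) {t : ℝ} (ht : 0 ≤ t) :
    w x ≤ exp (-(α * t)) * w (x + t) := by
  have h := monotoneOn_exp_neg_mul_mul_of_mul_le_deriv hw hα self_mem_Ici
    (show x ≤ x + t by linarith) (by linarith)
  have hsplit : exp (-(α * (x + t))) = exp (-(α * x)) * exp (-(α * t)) := by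
    rw [← exp_add]; ring_nf
  simp only [hsplit, mul_assoc] at h
  exact le_of_mul_le_mul_left h (exp_pos _)

theorem stmt_6_general {U : Type*} [NormedAddCommGroup U]
    (w : ℝ → ℝ) (hw_diff : Differentiable ℝ w)
    (hw_mono : MonotoneOn w (Ici 0)) (hw0 : w 0 = 1)
    (α : ℝ) (hα : ∀ x ≥ (0:ℝ), α * w x ≤ deriv w x)
    (t : ℝ) (ht : 0 ≤ t)
    (f' : ℝ → U)
    (hf_w : IntegrableOn (fun y => w y * ‖f' y‖ ^ 2) (Ioi 0)) :
    ∫ x in Ioi (0:ℝ), w x * ‖f' (x + t)‖ ^ 2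
      ≤ Real.exp (-(α * t)) * ∫ x in Ioi (0:ℝ), w x * ‖f' x‖ ^ 2 := by
  set G : ℝ → ℝ := fun y => w y * ‖f' y‖ ^ 2
  have hw_nonneg : ∀ y ≥ 0, 0 ≤ w y := fun y hy =>
    zero_le_one.trans (hw0 ▸ hw_mono self_mem_Ici hy hy)
  have hG_shift : IntegrableOn (fun x => G (x + t)) (Ioi 0) :=
    (integrableOn_Ioi_comp_add_right_iff G 0 t).2
      (hf_w.mono_set (Ioi_subset_Ioi (by rwa [zero_add])))
  calc ∫ x in Ioi (0:ℝ), w x * ‖f' (x + t)‖ ^ 2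
      ≤ ∫ x in Ioi (0:ℝ), exp (-(α * t)) * G (x + t) := by
        refine integral_mono_of_nonneg ?_ (hG_shift.const_mul _) ?_ <;>
          filter_upwards [ae_restrict_mem measurableSet_Ioi] with x hx
        · exact mul_nonneg (hw_nonneg x hx.le) (sq_nonneg _)
        · rw [← mul_assoc]
          exact mul_le_mul_of_nonneg_right
            (le_exp_neg_mul_mul_add_of_mul_le_deriv hw_diff
              (fun y hy => hα y (hx.le.trans hy)) ht) (sq_nonneg _)
    _ = exp (-(α * t)) * ∫ y in Ioi t, G y := by
        rw [integral_const_mul, integral_Ioi_comp_add_right, zero_add]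
    _ ≤ exp (-(α * t)) * ∫ y in Ioi (0:ℝ), G y :=
        mul_le_mul_of_nonneg_left (setIntegral_mono_set hf_w
          ((ae_restrict_mem measurableSet_Ioi).mono fun y hy =>
            mul_nonneg (hw_nonneg y hy.le) (sq_nonneg _))
          (Ioi_subset_Ioi ht).eventuallyLE) (exp_nonneg _)

/-- if `f ∈ H_w` has `f(∞) = 0`, then the shift semigroup satisfies
`‖S_t f‖²_{w,∞} ≤ e^{−α_w t}‖f‖²_{w,∞}`, where `α_w = inf_{x≥0} w'(x)/w(x)`.
Since `(S_t f)(∞) = 0 = f(∞)`, the `‖·‖_{w,∞}`-norms are just the weighted integrals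
of the derivatives. -/
theorem stmt_6 {U : Type*} [NormedAddCommGroup U] [InnerProductSpace ℝ U]
    [CompleteSpace U] [SecondCountableTopology U]
    (w : ℝ → ℝ) (hw_diff : Differentiable ℝ w) (hw_cont : Continuous (deriv w))
    (hw_mono : MonotoneOn w (Ici 0)) (hw0 : w 0 = 1)
    (hw_inv : IntegrableOn (fun s => (w s)⁻¹) (Ioi 0))
    (α : ℝ) (hα : ∀ x ≥ (0:ℝ), α * w x ≤ deriv w x)
    (t : ℝ) (ht : 0 ≤ t)
    (f f' : ℝ → U)
    (hf_loc : ∀ y ∈ Ici (0:ℝ), IntervalIntegrable f' volume 0 y)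
    (hf_ac : ∀ y ∈ Ici (0:ℝ), f y = f 0 + ∫ s in (0:ℝ)..y, f' s)
    (hf_w : IntegrableOn (fun y => w y * ‖f' y‖ ^ 2) (Ioi 0))
    (hf_inf : Tendsto f atTop (nhds (0:U))) :
    ∫ x in Ioi (0:ℝ), w x * ‖f' (x + t)‖ ^ 2
      ≤ Real.exp (-(α * t)) * ∫ x in Ioi (0:ℝ), w x * ‖f' x‖ ^ 2 :=
  stmt_6_general w hw_diff hw_mono hw0 α hα t ht f' hf_w
end

section
/- Under the assumptions on w (and additionally α_w = inf w'/w > 0, ensuring exponential decay), the map δ_∞ : H_w → U, h ↦ lim_{t→∞} h(t), is a bounded linear operator with operator norm (in the ‖·‖_w norm) equal to ‖δ_x‖_op in the limit, i.e. ‖δ_∞‖²_op = 1 + ∫₀^∞ w(s)⁻¹ ds; moreover δ_∞ is the pointwise limit of the evaluation operators δ_t as t → ∞. -/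
open MeasureTheory Set Filter Real

/-- Membership in the weighted space `H_w`. -/
def MemHw {E : Type*} [NormedAddCommGroup E] [NormedSpace ℝ E]
    (w : ℝ → ℝ) (f f' : ℝ → E) : Prop :=
  (∀ y ∈ Ici (0:ℝ), IntervalIntegrable f' volume 0 y) ∧
  (∀ y ∈ Ici (0:ℝ), f y = f 0 + ∫ s in (0:ℝ)..y, f' s) ∧
  IntegrableOn (fun y => w y * ‖f' y‖ ^ 2) (Ioi 0)

/-!
Cauchy–Schwarz against the weight,
`∫ ‖h'‖ = ∫ w^{-1/2} · w^{1/2} ‖h'‖ ≤ (∫ w⁻¹)^{1/2} (∫ w ‖h'‖²)^{1/2}`,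
shows `h' ∈ L¹(0, ∞)`, so `h t = h 0 + ∫₀ᵗ h'` converges as `t → ∞`. Cauchy–Schwarz once more,
in `ℝ²`, gives `‖δ_∞ h‖² ≤ (1 + ∫ w⁻¹) ‖h‖²_w`. Both inequalities are equalities for
`h' = w⁻¹ • u`.
-/

section WeightedCauchySchwarz

variable {α E : Type*} [MeasurableSpace α] {μ : Measure α} [NormedAddCommGroup E]
  {w : α → ℝ} {g : α → E}

lemma memLp_two_sqrt_inv (hw : ∀ᵐ x ∂μ, 0 < w x) (hw_inv : Integrable (fun x => (w x)⁻¹) μ) :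
    MemLp (fun x => √(w x)⁻¹) 2 μ := by
  refine (memLp_two_iff_integrable_sq
    hw_inv.aemeasurable.sqrt.aestronglyMeasurable).2 (hw_inv.congr ?_)
  filter_upwards [hw] with x hx using (sq_sqrt (inv_nonneg.2 hx.le)).symm

lemma memLp_two_sqrt_mul_norm (hw : ∀ᵐ x ∂μ, 0 < w x)
    (hw_inv : Integrable (fun x => (w x)⁻¹) μ) (hg : AEStronglyMeasurable g μ)
    (hwg : Integrable (fun x => w x * ‖g x‖ ^ 2) μ) :
    MemLp (fun x => √(w x) * ‖g x‖) 2 μ := by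
  have hw_meas : AEMeasurable w μ := by
    simpa only [Pi.inv_def, inv_inv] using hw_inv.aemeasurable.inv
  refine (memLp_two_iff_integrable_sq (f := fun x => √(w x) * ‖g x‖)
    (hw_meas.sqrt.aestronglyMeasurable.mul hg.norm)).2 (hwg.congr ?_)
  filter_upwards [hw] with x hx
  rw [mul_pow, sq_sqrt hx.le]

lemma norm_ae_eq_sqrt_inv_mul_sqrt_mul_norm (hw : ∀ᵐ x ∂μ, 0 < w x) :
    (fun x => ‖g x‖) =ᵐ[μ] fun x => √(w x)⁻¹ * (√(w x) * ‖g x‖) := by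
  filter_upwards [hw] with x hx
  rw [← mul_assoc, ← sqrt_mul (inv_nonneg.2 hx.le), inv_mul_cancel₀ hx.ne', sqrt_one, one_mul]

theorem integrable_of_integrable_inv_of_integrable_mul_norm_sq (hw : ∀ᵐ x ∂μ, 0 < w x)
    (hw_inv : Integrable (fun x => (w x)⁻¹) μ) (hg : AEStronglyMeasurable g μ)
    (hwg : Integrable (fun x => w x * ‖g x‖ ^ 2) μ) : Integrable g μ :=
  (integrable_norm_iff hg).1 <| Integrable.congr
    ((memLp_two_sqrt_inv hw hw_inv).integrable_mul (memLp_two_sqrt_mul_norm hw hw_inv hg hwg))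
    (norm_ae_eq_sqrt_inv_mul_sqrt_mul_norm hw).symm

theorem integral_norm_le_sqrt_integral_inv_mul_sqrt_integral_mul_norm_sq
    (hw : ∀ᵐ x ∂μ, 0 < w x) (hw_inv : Integrable (fun x => (w x)⁻¹) μ)
    (hg : AEStronglyMeasurable g μ) (hwg : Integrable (fun x => w x * ‖g x‖ ^ 2) μ) :
    ∫ x, ‖g x‖ ∂μ ≤ √(∫ x, (w x)⁻¹ ∂μ) * √(∫ x, w x * ‖g x‖ ^ 2 ∂μ) := by
  have two : ENNReal.ofReal 2 = 2 := by norm_num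
  have holder := integral_mul_le_Lp_mul_Lq_of_nonneg Real.HolderConjugate.two_two
    (Eventually.of_forall fun x => sqrt_nonneg _)
    (Eventually.of_forall fun x => mul_nonneg (sqrt_nonneg _) (norm_nonneg _))
    (two ▸ memLp_two_sqrt_inv hw hw_inv) (two ▸ memLp_two_sqrt_mul_norm hw hw_inv hg hwg)
  rw [integral_congr_ae (norm_ae_eq_sqrt_inv_mul_sqrt_mul_norm hw), sqrt_eq_rpow, sqrt_eq_rpow]
  convert holder using 3 <;> refine integral_congr_ae ?_ <;> filter_upwards [hw] with x hx
  · rw [rpow_two, sq_sqrt (inv_nonneg.2 hx.le)]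
  · rw [rpow_two, mul_pow, sq_sqrt hx.le]

end WeightedCauchySchwarz

lemma aestronglyMeasurable_restrict_Ioi_of_intervalIntegrable {E : Type*}
    [NormedAddCommGroup E] {f : ℝ → E} {a : ℝ}
    (hf : ∀ y ∈ Ici a, IntervalIntegrable f volume a y) :
    AEStronglyMeasurable f (volume.restrict (Ioi a)) := by
  have hIoi : Ioi a = ⋃ n : ℕ, Ioc a (a + n) := by
    ext x
    simp only [mem_Ioi, mem_iUnion, mem_Ioc]
    refine ⟨fun hx => ?_, fun ⟨_, hx, _⟩ => hx⟩
    obtain ⟨n, hn⟩ := exists_nat_ge (x - a)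
    exact ⟨n, hx, by linarith⟩
  rw [hIoi, aestronglyMeasurable_iUnion_iff]
  exact fun n => (hf _ (by simp)).1.aestronglyMeasurable

lemma sq_add_sqrt_mul_sqrt_le {a A B : ℝ} (hA : 0 ≤ A) (hB : 0 ≤ B) :
    (a + √A * √B) ^ 2 ≤ (1 + A) * (a ^ 2 + B) := by
  nlinarith [sq_nonneg (√A * a - √B), sq_sqrt hA, sq_sqrt hB]

namespace MemHw

variable {E : Type*} [NormedAddCommGroup E] [NormedSpace ℝ E] {w : ℝ → ℝ} {f f' : ℝ → E}

theorem integrableOn_deriv (hw : ∀ x ∈ Ioi 0, 0 < w x)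
    (hw_inv : IntegrableOn (fun s => (w s)⁻¹) (Ioi 0)) (hf : MemHw w f f') :
    IntegrableOn f' (Ioi 0) :=
  integrable_of_integrable_inv_of_integrable_mul_norm_sq
    (ae_restrict_of_forall_mem measurableSet_Ioi hw) hw_inv
    (aestronglyMeasurable_restrict_Ioi_of_intervalIntegrable hf.1) hf.2.2

theorem tendsto_atTop [CompleteSpace E] (hw : ∀ x ∈ Ioi 0, 0 < w x)
    (hw_inv : IntegrableOn (fun s => (w s)⁻¹) (Ioi 0)) (hf : MemHw w f f') :
    Tendsto f atTop (nhds (f 0 + ∫ s in Ioi 0, f' s)) := by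
  refine (tendsto_const_nhds.add
    (intervalIntegral_tendsto_integral_Ioi 0 (hf.integrableOn_deriv hw hw_inv) tendsto_id)).congr' ?_
  filter_upwards [eventually_ge_atTop 0] with y hy using (hf.2.1 y hy).symm

theorem sq_norm_add_integral_le (hw : ∀ x ∈ Ioi 0, 0 < w x)
    (hw_inv : IntegrableOn (fun s => (w s)⁻¹) (Ioi 0)) (hf : MemHw w f f') :
    ‖f 0 + ∫ s in Ioi 0, f' s‖ ^ 2
      ≤ (1 + ∫ s in Ioi 0, (w s)⁻¹) * (‖f 0‖ ^ 2 + ∫ x in Ioi 0, w x * ‖f' x‖ ^ 2) := by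
  have hw_ae : ∀ᵐ x ∂volume.restrict (Ioi (0:ℝ)), 0 < w x :=
    ae_restrict_of_forall_mem measurableSet_Ioi hw
  have h_cs := integral_norm_le_sqrt_integral_inv_mul_sqrt_integral_mul_norm_sq hw_ae hw_inv
    (aestronglyMeasurable_restrict_Ioi_of_intervalIntegrable hf.1) hf.2.2
  have h_norm : ‖f 0 + ∫ s in Ioi 0, f' s‖
      ≤ ‖f 0‖ + √(∫ s in Ioi 0, (w s)⁻¹) * √(∫ x in Ioi 0, w x * ‖f' x‖ ^ 2) :=
    (norm_add_le _ _).trans (add_le_add le_rfl ((norm_integral_le_integral_norm _).trans h_cs))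
  calc ‖f 0 + ∫ s in Ioi 0, f' s‖ ^ 2
      ≤ (‖f 0‖ + √(∫ s in Ioi 0, (w s)⁻¹) * √(∫ x in Ioi 0, w x * ‖f' x‖ ^ 2)) ^ 2 :=
        pow_le_pow_left₀ (norm_nonneg _) h_norm 2
    _ ≤ _ := sq_add_sqrt_mul_sqrt_le
        (setIntegral_nonneg measurableSet_Ioi fun x hx => (inv_pos.2 (hw x hx)).le)
        (setIntegral_nonneg measurableSet_Ioi fun x hx => by positivity [hw x hx])

end MemHw

lemma mul_norm_inv_smul_sq {E : Type*} [NormedAddCommGroup E] [NormedSpace ℝ E] {t : ℝ}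
    (ht : 0 < t) (u : E) : t * ‖t⁻¹ • u‖ ^ 2 = t⁻¹ * ‖u‖ ^ 2 := by
  rw [norm_smul, norm_inv, Real.norm_of_nonneg ht.le]
  field_simp

section Extremal

variable {E : Type*} [NormedAddCommGroup E] [NormedSpace ℝ E] {w : ℝ → ℝ}

theorem memHw_one_add_integral_inv_smul [CompleteSpace E] (hw : ∀ x ∈ Ioi 0, 0 < w x)
    (hw_inv : IntegrableOn (fun s => (w s)⁻¹) (Ioi 0)) (u : E) :
    MemHw w (fun x => (1 + ∫ s in (0:ℝ)..x, (w s)⁻¹) • u) (fun x => (w x)⁻¹ • u) := by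
  refine ⟨fun y hy => ?_, fun y _ => ?_, ?_⟩
  · exact (intervalIntegrable_iff_integrableOn_Ioc_of_le hy).2
      ((hw_inv.mono_set Ioc_subset_Ioi_self).smul_const u)
  · simp only [intervalIntegral.integral_same, add_zero, one_smul, add_smul,
      intervalIntegral.integral_smul_const]
  · exact IntegrableOn.congr_fun (hw_inv.mul_const (‖u‖ ^ 2))
      (fun x hx => (mul_norm_inv_smul_sq (hw x hx) u).symm) measurableSet_Ioi

theorem sq_norm_add_integral_inv_smul [CompleteSpace E] (hw : ∀ x ∈ Ioi 0, 0 < w x) (u : E) :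
    ‖u + ∫ s in Ioi 0, (w s)⁻¹ • u‖ ^ 2
      = (1 + ∫ s in Ioi 0, (w s)⁻¹) * (‖u‖ ^ 2 + ∫ x in Ioi 0, w x * ‖(w x)⁻¹ • u‖ ^ 2) := by
  have hC : 0 ≤ ∫ s in Ioi 0, (w s)⁻¹ :=
    setIntegral_nonneg measurableSet_Ioi fun x hx => (inv_pos.2 (hw x hx)).le
  rw [setIntegral_congr_fun measurableSet_Ioi fun x hx => mul_norm_inv_smul_sq (hw x hx) u,
    integral_mul_const, integral_smul_const]
  calc ‖u + (∫ s in Ioi 0, (w s)⁻¹) • u‖ ^ 2 = ‖(1 + ∫ s in Ioi 0, (w s)⁻¹) • u‖ ^ 2 := by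
        rw [add_smul, one_smul]
    _ = _ := by
        rw [norm_smul, Real.norm_of_nonneg (by linarith)]
        ring

end Extremal

theorem stmt_15_general {U : Type*} [NormedAddCommGroup U] [InnerProductSpace ℝ U]
    [CompleteSpace U]
    (w : ℝ → ℝ) (hw_mono : MonotoneOn w (Ici 0))
    (hw0 : w 0 = 1)
    (hw_inv : IntegrableOn (fun s => (w s)⁻¹) (Ioi 0)) :
    -- δ_∞ is the pointwise limit at infinity of the evaluation maps
    (∀ f f' : ℝ → U, MemHw w f f' →
      Tendsto f atTop (nhds (f 0 + ∫ s in Ioi (0:ℝ), f' s))) ∧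
    -- boundedness: ‖δ_∞ f‖² ≤ (1 + ∫₀^∞ w⁻¹) ‖f‖²_w
    (∀ f f' : ℝ → U, MemHw w f f' →
      ‖f 0 + ∫ s in Ioi (0:ℝ), f' s‖ ^ 2
        ≤ (1 + ∫ s in Ioi (0:ℝ), (w s)⁻¹)
          * (‖f 0‖ ^ 2 + ∫ x in Ioi (0:ℝ), w x * ‖f' x‖ ^ 2)) ∧
    -- the bound is sharp: with f = (1 + ∫₀^{·} w⁻¹) • u equality holds,
    -- hence ‖δ_∞‖²_op = 1 + ∫₀^∞ w⁻¹
    (∀ u : U,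
      MemHw w (fun x => (1 + ∫ s in (0:ℝ)..x, (w s)⁻¹) • u) (fun x => (w x)⁻¹ • u) ∧
      ‖(fun x : ℝ => (1 + ∫ s in (0:ℝ)..x, (w s)⁻¹) • u) 0
            + ∫ s in Ioi (0:ℝ), (w s)⁻¹ • u‖ ^ 2
        = (1 + ∫ s in Ioi (0:ℝ), (w s)⁻¹)
          * (‖(fun x : ℝ => (1 + ∫ s in (0:ℝ)..x, (w s)⁻¹) • u) 0‖ ^ 2
              + ∫ x in Ioi (0:ℝ), w x * ‖(w x)⁻¹ • u‖ ^ 2)) := by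
  have hw : ∀ x ∈ Ioi (0:ℝ), 0 < w x := fun x hx =>
    one_pos.trans_le (hw0 ▸ hw_mono self_mem_Ici (mem_Ici.2 hx.le) hx.le)
  refine ⟨fun f f' hf => hf.tendsto_atTop hw hw_inv,
    fun f f' hf => hf.sq_norm_add_integral_le hw hw_inv,
    fun u => ⟨memHw_one_add_integral_inv_smul hw hw_inv u, ?_⟩⟩
  simpa using sq_norm_add_integral_inv_smul hw u

/-- `δ_∞ : H_w → U`, `h ↦ lim_{t→∞} h(t)`, is the pointwise limit of the
evaluations `δ_t` (the limit exists and equals `h 0 + ∫₀^∞ h'`), it is bounded with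
`‖δ_∞ h‖² ≤ C ‖h‖²_w` for `C = 1 + ∫₀^∞ w(s)⁻¹ ds`, and this bound is attained (so
`‖δ_∞‖²_op = C`): equality holds for `f_u = (1 + ∫₀^{·} w⁻¹) • u`. -/
theorem stmt_15 {U : Type*} [NormedAddCommGroup U] [InnerProductSpace ℝ U]
    [CompleteSpace U] [SecondCountableTopology U]
    (w : ℝ → ℝ) (hw_cont : Continuous w) (hw_mono : MonotoneOn w (Ici 0))
    (hw0 : w 0 = 1) (hw_diff : Differentiable ℝ w)
    (hw_inv : IntegrableOn (fun s => (w s)⁻¹) (Ioi 0))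
    (α : ℝ) (hαpos : 0 < α) (hα : ∀ x ≥ (0:ℝ), α * w x ≤ deriv w x) :
    -- δ_∞ is the pointwise limit at infinity of the evaluation maps
    (∀ f f' : ℝ → U, MemHw w f f' →
      Tendsto f atTop (nhds (f 0 + ∫ s in Ioi (0:ℝ), f' s))) ∧
    -- boundedness: ‖δ_∞ f‖² ≤ (1 + ∫₀^∞ w⁻¹) ‖f‖²_w
    (∀ f f' : ℝ → U, MemHw w f f' →
      ‖f 0 + ∫ s in Ioi (0:ℝ), f' s‖ ^ 2
        ≤ (1 + ∫ s in Ioi (0:ℝ), (w s)⁻¹)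
          * (‖f 0‖ ^ 2 + ∫ x in Ioi (0:ℝ), w x * ‖f' x‖ ^ 2)) ∧
    -- the bound is sharp: with f = (1 + ∫₀^{·} w⁻¹) • u equality holds,
    -- hence ‖δ_∞‖²_op = 1 + ∫₀^∞ w⁻¹
    (∀ u : U,
      MemHw w (fun x => (1 + ∫ s in (0:ℝ)..x, (w s)⁻¹) • u) (fun x => (w x)⁻¹ • u) ∧
      ‖(fun x : ℝ => (1 + ∫ s in (0:ℝ)..x, (w s)⁻¹) • u) 0
            + ∫ s in Ioi (0:ℝ), (w s)⁻¹ • u‖ ^ 2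
        = (1 + ∫ s in Ioi (0:ℝ), (w s)⁻¹)
          * (‖(fun x : ℝ => (1 + ∫ s in (0:ℝ)..x, (w s)⁻¹) • u) 0‖ ^ 2
              + ∫ x in Ioi (0:ℝ), w x * ‖(w x)⁻¹ • u‖ ^ 2)) :=
  stmt_15_general w hw_mono hw0 hw_inv
end
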